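/- For any unit quaternion (η̃, q̃) and any vector r ∈ R^3, with R̃ = I + 2S(q̃)² − 2η̃S(q̃), the identity q̃^T S(r) R̃ r = 2 η̃ q̃^T S(r)² q̃ holds. -/

import Mathlib

open Matrix

noncomputable section

/-- The skew-symmetric (cross-product) matrix `S(x)`, satisfying `S(x) y = x × y`. -/
def sk (x : Fin 3 → ℝ) : Matrix (Fin 3) (Fin 3) ℝ :=
  !![0, -x 2, x 1; x 2, 0, -x 0; -x 1, x 0, 0]

/-- The Euclidean norm of a vector in ℝ³. -/
def vnorm (x : Fin 3 → ℝ) : ℝ := Real.sqrt (x ⬝ᵥ x)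

/-- The Rodrigues map `R(Q) = I + 2 S(q)² - 2 η S(q)`. -/
def rod (η : ℝ) (q : Fin 3 → ℝ) : Matrix (Fin 3) (Fin 3) ℝ :=
  1 + (2 : ℝ) • sk q ^ 2 - (2 * η) • sk q

/-!
Writing `S(x) y = x × y`, we get `R̃ r = r + 2 q̃ × (q̃ × r) - 2η̃ q̃ × r`. After applying `S(r)` and
pairing with `q̃`, the first term vanishes since `r × r = 0`, the second is the triple product
`(q̃ × r) · (q̃ × (q̃ × r)) = 0`, and the third becomes the right-hand side by
`q̃ × r = -(r × q̃)`.
-/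

theorem sk_mulVec (x y : Fin 3 → ℝ) : sk x *ᵥ y = x ⨯₃ y := by
  ext i
  fin_cases i <;> simp [sk, cross_apply, mulVec, dotProduct, Fin.sum_univ_three] <;> ring

theorem sk_sq_mulVec (x y : Fin 3 → ℝ) : (sk x ^ 2) *ᵥ y = x ⨯₃ (x ⨯₃ y) := by
  rw [sq, ← mulVec_mulVec, sk_mulVec, sk_mulVec]

theorem rod_mulVec (η : ℝ) (q r : Fin 3 → ℝ) :
    rod η q *ᵥ r = r + (2 : ℝ) • q ⨯₃ (q ⨯₃ r) - (2 * η) • q ⨯₃ r := by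
  rw [rod, sub_mulVec, add_mulVec, one_mulVec, smul_mulVec, smul_mulVec,
    sk_sq_mulVec, sk_mulVec]

theorem dot_cross_cross_cross_self (u v : Fin 3 → ℝ) : u ⬝ᵥ v ⨯₃ (u ⨯₃ (u ⨯₃ v)) = 0 := by
  rw [triple_product_permutation, triple_product_permutation, dotProduct_comm, dot_cross_self]

theorem quaternion_skew_identity_general (ηt : ℝ) (qt : Fin 3 → ℝ) (r : Fin 3 → ℝ) :
    qt ⬝ᵥ (sk r).mulVec ((rod ηt qt).mulVec r) =
      2 * ηt * (qt ⬝ᵥ (sk r ^ 2).mulVec qt) := by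
  rw [rod_mulVec, sk_mulVec, sk_sq_mulVec, map_sub, map_add, map_smul, map_smul, cross_self,
    dotProduct_sub, dotProduct_add, dotProduct_smul, dotProduct_smul, dot_cross_cross_cross_self,
    ← cross_anticomm r qt, map_neg, dotProduct_neg]
  simp only [dotProduct_zero, smul_eq_mul]
  ring

theorem quaternion_skew_identity (ηt : ℝ) (qt : Fin 3 → ℝ)
    (hQ : ηt ^ 2 + vnorm qt ^ 2 = 1) (r : Fin 3 → ℝ) :
    qt ⬝ᵥ (sk r).mulVec ((rod ηt qt).mulVec r) =
      2 * ηt * (qt ⬝ᵥ (sk r ^ 2).mulVec qt) :=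
  quaternion_skew_identity_general ηt qt r

end
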